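/- Let S be the real vector space of self-adjoint operators on a finite-dimensional complex inner product space W, let S_+ ⊂ S be the positive semidefinite ones, and let M = {(D, λ) ∈ S_+ × ℂ : det D = |λ|²}. Then the map φ : M → (S/ℝE) ⊕ ℂ sending (D, λ) to (D + ℝE, λ) is bijective. -/

import Mathlib

/-!
Translating a Hermitian matrix by `t • 1` shifts each of its eigenvalues by `t`. Hence on the
coset `D + ℝ • 1` the matrix is positive semidefinite exactly for `t ≥ -λ_min(D)`, and there
`det (D + t • 1) = ∏ i, (λᵢ + t)` increases strictly and continuously from `0` to `∞`: every
coset contains exactly one positive semidefinite matrix of any prescribed determinant `c ≥ 0`.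
-/

open Set
open scoped ComplexOrder

section ProdAdd

variable {ι : Type*} [Fintype ι] [Nonempty ι]

theorem strictMonoOn_prod_add (μ : ι → ℝ) :
    StrictMonoOn (fun t => ∏ i, (μ i + t)) {t | ∀ i, 0 ≤ μ i + t} := by
  intro s hs t _ hst
  have hpos : ∀ i, 0 < μ i + t := fun i => by linarith [hs i]
  by_cases hzero : ∃ i, μ i + s = 0
  · obtain ⟨i, hi⟩ := hzero
    calc ∏ i, (μ i + s) = 0 := Finset.prod_eq_zero (f := fun i => μ i + s) (Finset.mem_univ i) hi
      _ < ∏ i, (μ i + t) := Finset.prod_pos fun i _ => hpos i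
  · push Not at hzero
    exact Finset.prod_lt_prod_of_nonempty (fun i _ => (hs i).lt_of_ne' (hzero i))
      (fun i _ => by linarith) Finset.univ_nonempty

theorem exists_nonneg_prod_add_eq (μ : ι → ℝ) {c : ℝ} (hc : 0 ≤ c) :
    ∃ t, (∀ i, 0 ≤ μ i + t) ∧ ∏ i, (μ i + t) = c := by
  obtain ⟨i₀, hi₀⟩ := Finite.exists_min μ
  have hcont : Continuous fun t => ∏ i, (μ i + t) := by fun_prop
  have hstart : ∏ i, (μ i + -μ i₀) = 0 :=
    Finset.prod_eq_zero (Finset.mem_univ i₀) (add_neg_cancel _)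
  have hend : c ≤ ∏ i, (μ i + (-μ i₀ + (c + 1))) := calc
    c ≤ c + 1 := by linarith
    _ ≤ (c + 1) ^ Fintype.card ι := le_self_pow₀ (by linarith) Fintype.card_ne_zero
    _ = ∏ _i : ι, (c + 1) := (Finset.prod_const _).symm
    _ ≤ ∏ i, (μ i + (-μ i₀ + (c + 1))) :=
      Finset.prod_le_prod (fun _ _ => by linarith) fun i _ => by linarith [hi₀ i]
  obtain ⟨t, ht, hprod⟩ := intermediate_value_Icc (by linarith) hcont.continuousOn
    ⟨hstart ▸ hc, hend⟩
  exact ⟨t, fun i => by linarith [hi₀ i, ht.1], hprod⟩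

end ProdAdd

open Matrix Unitary

namespace Matrix.IsHermitian

variable {n 𝕜 : Type*} [Fintype n] [DecidableEq n] [RCLike 𝕜] {A : Matrix n n 𝕜}

theorem add_smul_one_eq_conj_diagonal (hA : A.IsHermitian) (t : ℝ) :
    A + t • (1 : Matrix n n 𝕜) = conjStarAlgAut 𝕜 _ hA.eigenvectorUnitary
      (diagonal fun i => ((hA.eigenvalues i + t : ℝ) : 𝕜)) := by
  have hdiag : (diagonal fun i => ((hA.eigenvalues i + t : ℝ) : 𝕜)) =
      diagonal (RCLike.ofReal ∘ hA.eigenvalues) + (t : 𝕜) • 1 := by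
    ext i j
    rcases eq_or_ne i j with rfl | hij <;> simp [*, Algebra.algebraMap_eq_smul_one, add_smul]
  conv_lhs => rw [hA.spectral_theorem]
  rw [hdiag, map_add, map_smul, map_one, RCLike.real_smul_eq_coe_smul (K := 𝕜)]

theorem det_add_smul_one (hA : A.IsHermitian) (t : ℝ) :
    (A + t • (1 : Matrix n n 𝕜)).det = ∏ i, ((hA.eigenvalues i + t : ℝ) : 𝕜) := by
  rw [hA.add_smul_one_eq_conj_diagonal, conjStarAlgAut_apply, det_mul_right_comm,
    ← coe_star, coe_mul_star_self, one_mul, det_diagonal]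

theorem posSemidef_add_smul_one_iff (hA : A.IsHermitian) (t : ℝ) :
    (A + t • (1 : Matrix n n 𝕜)).PosSemidef ↔ ∀ i, 0 ≤ hA.eigenvalues i + t := by
  rw [hA.add_smul_one_eq_conj_diagonal, conjStarAlgAut_apply,
    isUnit_coe.posSemidef_star_right_conjugate_iff, posSemidef_diagonal_iff]
  simp only [RCLike.ofReal_nonneg]

theorem injOn_det_add_smul_one [Nonempty n] (hA : A.IsHermitian) :
    InjOn (fun t : ℝ => (A + t • (1 : Matrix n n 𝕜)).det)
      {t | (A + t • (1 : Matrix n n 𝕜)).PosSemidef} := by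
  intro s hs t ht hdet
  simp only [mem_ofPred_eq, hA.posSemidef_add_smul_one_iff] at hs ht
  simp only [hA.det_add_smul_one, ← RCLike.ofReal_prod, RCLike.ofReal_inj] at hdet
  exact (strictMonoOn_prod_add _).injOn hs ht hdet

theorem exists_posSemidef_det_add_smul_one_eq [Nonempty n] (hA : A.IsHermitian) {c : ℝ}
    (hc : 0 ≤ c) : ∃ t : ℝ, (A + t • (1 : Matrix n n 𝕜)).PosSemidef ∧
      (A + t • (1 : Matrix n n 𝕜)).det = c := by
  obtain ⟨t, hnonneg, hprod⟩ := exists_nonneg_prod_add_eq hA.eigenvalues hc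
  refine ⟨t, (hA.posSemidef_add_smul_one_iff t).mpr hnonneg, ?_⟩
  rw [hA.det_add_smul_one, ← RCLike.ofReal_prod, hprod]

end Matrix.IsHermitian

/-- Let `S` be the real vector space of self-adjoint (Hermitian) `n × n` complex
matrices (the self-adjoint operators on an `n`-dimensional complex inner product
space), `S₊ ⊆ S` the positive semidefinite ones, and
`M = {(D, λ) ∈ S₊ × ℂ : det D = |λ|²}`. Then the map `φ : M → (S／ℝ·E) × ℂ`
sending `(D, λ)` to `(D + ℝ·E, λ)` is bijective. -/
theorem bijective_quotient_map_posSemidef_det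
    (n : ℕ) (hn : 1 ≤ n)
    (S : Submodule ℝ (Matrix (Fin n) (Fin n) ℂ))
    (hS : S = selfAdjoint.submodule ℝ (Matrix (Fin n) (Fin n) ℂ))
    (lineE : Submodule ℝ S)
    (hline : lineE = Submodule.span ℝ
      {(⟨(1 : Matrix (Fin n) (Fin n) ℂ),
          by rw [hS]; exact IsSelfAdjoint.one _⟩ : S)})
    (M : Set (S × ℂ))
    (hM : M = {p : S × ℂ | (p.1 : Matrix (Fin n) (Fin n) ℂ).PosSemidef ∧
      (p.1 : Matrix (Fin n) (Fin n) ℂ).det = (‖p.2‖ ^ 2 : ℝ)}) :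
    Function.Bijective (fun p : M => ((Submodule.Quotient.mk p.val.1 : S ⧸ lineE),
      p.val.2)) := by
  subst hS hline hM
  have : Nonempty (Fin n) := Fin.pos_iff_nonempty.mp hn
  constructor
  · rintro ⟨⟨D₁, z₁⟩, hD₁, hdet₁⟩ ⟨⟨D₂, z₂⟩, hD₂, hdet₂⟩ h
    simp only [Prod.mk.injEq] at h
    obtain ⟨hD, rfl⟩ := h
    obtain ⟨t, ht⟩ := Submodule.mem_span_singleton.mp ((Submodule.Quotient.eq _).mp hD)
    have hD₁_eq : (D₁ : Matrix (Fin n) (Fin n) ℂ) = D₂ + t • 1 :=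
      eq_add_of_sub_eq' (congrArg Subtype.val ht).symm
    have ht0 : t = 0 := by
      refine IsHermitian.injOn_det_add_smul_one D₂.2 (by simpa [← hD₁_eq] using hD₁)
        (by simpa using hD₂) ?_
      simp [← hD₁_eq, hdet₁, hdet₂]
    obtain rfl : D₁ = D₂ := Subtype.ext (by simp [hD₁_eq, ht0])
    rfl
  · rintro ⟨q, z⟩
    obtain ⟨A, rfl⟩ := Submodule.Quotient.mk_surjective _ q
    obtain ⟨t, hpsd, hdet⟩ :=
      IsHermitian.exists_posSemidef_det_add_smul_one_eq A.2 (sq_nonneg ‖z‖)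
    set E : selfAdjoint.submodule ℝ (Matrix (Fin n) (Fin n) ℂ) := ⟨1, IsSelfAdjoint.one _⟩
    have hE : (E : Matrix (Fin n) (Fin n) ℂ) = 1 := rfl
    refine ⟨⟨(A + t • E, z), ?_⟩, ?_⟩
    · simp only [mem_ofPred_eq, Submodule.coe_add, Submodule.coe_smul, hE]
      exact ⟨hpsd, hdet⟩
    simp only [Prod.mk.injEq, and_true, Submodule.Quotient.eq, add_sub_cancel_left]
    exact Submodule.smul_mem _ _ (Submodule.mem_span_singleton_self _)
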